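/- arXiv:2601.14623 — 5 statements merged into one kernel-verified Lean document; each statement's English description precedes it below -/
import Mathlib

section
/- Let t, s, n be natural numbers with t ≥ 1, and let x, y ∈ {0,1}^n be distinct strings such that the Hamming distance d_H(x,y) < ⌈t/2⌉ and the Hamming weights satisfy |wt(x) − wt(y)| ≤ s. Then x and y are (t,s)-confusable. -/
/-- Hamming weight of a binary string: the number of `true` (i.e., `1`) entries. -/
def hammingWt (x : List Bool) : ℕ := x.count true

/-- Hamming distance between two binary strings of the same length:
the number of positions where they differ. -/
def hammingD (x y : List Bool) : ℕ := (List.zipWith (fun a b => a != b) x y).count true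

/-- Two binary strings `x` and `y` are `(t,s)`-confusable if there exist fragmentations
`Lx` of `x` and `Ly` of `y` into at most `t+1` fragments each (i.e., using at most `t`
breaks each), and sub-multisets `Ax`, `Ay` of omitted fragments of total length at most
`s` each, such that the remaining multisets of fragments coincide. -/
def Confusable (t s : ℕ) (x y : List Bool) : Prop :=
  ∃ (Lx Ly : List (List Bool)) (Ax Ay : Multiset (List Bool)),
    Lx.flatten = x ∧ Ly.flatten = y ∧
    Lx.length ≤ t + 1 ∧ Ly.length ≤ t + 1 ∧
    Ax ≤ (Lx : Multiset (List Bool)) ∧ Ay ≤ (Ly : Multiset (List Bool)) ∧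
    (Ax.map List.length).sum ≤ s ∧ (Ay.map List.length).sum ≤ s ∧
    ((Lx : Multiset (List Bool)) - Ax) = ((Ly : Multiset (List Bool)) - Ay)

lemma key : ∀ (x y : List Bool), x.length = y.length →
  ∃ (p : List Bool) (Rx Ry : List (List Bool)) (C : Multiset (List Bool)) (a b : ℕ),
    (p :: Rx).flatten = x ∧ (p :: Ry).flatten = y ∧
    Rx.length = 2*(a+b) ∧ Ry.length = 2*(a+b) ∧
    ((Rx : List (List Bool)) : Multiset (List Bool))
      = C + Multiset.replicate a [true] + Multiset.replicate b [false] ∧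
    ((Ry : List (List Bool)) : Multiset (List Bool))
      = C + Multiset.replicate b [true] + Multiset.replicate a [false] ∧
    a + b = hammingD x y ∧
    (hammingWt x : ℤ) - (hammingWt y : ℤ) = (a : ℤ) - b := by
  intro x
  induction x with
  | nil =>
    intro y hlen
    have : y = [] := List.eq_nil_of_length_eq_zero hlen.symm
    subst this
    exact ⟨[], [], [], 0, 0, 0, by simp, by simp, by simp, by simp, by simp, by simp,
      by simp [hammingD], by simp [hammingWt]⟩
  | cons c x' ih =>
    intro y hlen
    match y with
    | [] => simp at hlen
    | c' :: y' =>
      simp at hlen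
      obtain ⟨p, Rx, Ry, C, a, b, hfx, hfy, hlx, hly, hmx, hmy, hd, hw⟩ := ih y' hlen
      by_cases hc : c = c'
      · subst hc
        refine ⟨c :: p, Rx, Ry, C, a, b, ?_, ?_, hlx, hly, hmx, hmy, ?_, ?_⟩
        · simp at hfx ⊢; simp [hfx]
        · simp at hfy ⊢; simp [hfy]
        · simpa [hammingD, List.count_cons] using hd
        · simp only [hammingWt, List.count_cons] at hw ⊢
          push_cast
          push_cast at hw
          omega
      · -- c ≠ c'
        have hd' : hammingD (c :: x') (c' :: y') = hammingD x' y' + 1 := by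
          simp [hammingD, List.count_cons, hc]
        cases c with
        | true =>
          have hc' : c' = false := by cases c' <;> simp_all
          subst hc'
          refine ⟨[], [true] :: p :: Rx, [false] :: p :: Ry, p ::ₘ C, a+1, b, ?_, ?_, ?_, ?_, ?_, ?_, ?_, ?_⟩
          · simp at hfx ⊢; simp [hfx]
          · simp at hfy ⊢; simp [hfy]
          · simp [hlx]; ring
          · simp [hly]; ring
          · simp only [← Multiset.cons_coe, hmx, Multiset.replicate_succ,
              ← Multiset.singleton_add]
            abel
          · simp only [← Multiset.cons_coe, hmy, Multiset.replicate_succ,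
              ← Multiset.singleton_add]
            abel
          · rw [hd']; omega
          · simp [hammingWt, List.count_cons] at hw ⊢
            push_cast at hw ⊢
            omega
        | false =>
          have hc' : c' = true := by cases c' <;> simp_all
          subst hc'
          refine ⟨[], [false] :: p :: Rx, [true] :: p :: Ry, p ::ₘ C, a, b+1, ?_, ?_, ?_, ?_, ?_, ?_, ?_, ?_⟩
          · simp at hfx ⊢; simp [hfx]
          · simp at hfy ⊢; simp [hfy]
          · simp [hlx]; ring
          · simp [hly]; ring
          · simp only [← Multiset.cons_coe, hmx, Multiset.replicate_succ,
              ← Multiset.singleton_add]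
            abel
          · simp only [← Multiset.cons_coe, hmy, Multiset.replicate_succ,
              ← Multiset.singleton_add]
            abel
          · rw [hd']; omega
          · simp [hammingWt, List.count_cons] at hw ⊢
            push_cast at hw ⊢
            omega

/-- If `x ≠ y` have Hamming distance less than `⌈t/2⌉` and their Hamming weights differ
by at most `s`, then `x` and `y` are `(t,s)`-confusable. -/
theorem confusable_of_small_dist (t s n : ℕ) (ht : 1 ≤ t) (x y : List Bool)
    (hx : x.length = n) (hy : y.length = n) (hxy : x ≠ y)
    (hdist : hammingD x y < (t + 1) / 2)
    (hwt : ((hammingWt x : ℤ) - (hammingWt y : ℤ)).natAbs ≤ s) :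
    Confusable t s x y := by
  obtain ⟨p, Rx, Ry, C, a, b, hfx, hfy, hlx, hly, hmx, hmy, hd, hw⟩ :=
    key x y (by rw [hx, hy])
  have hlen : (p :: Rx).length ≤ t + 1 ∧ (p :: Ry).length ≤ t + 1 := by
    constructor <;> simp [hlx, hly] <;> omega
  have hsum : ∀ k : ℕ, ∀ u : List Bool,
      ((Multiset.replicate k u).map List.length).sum = k * u.length := by
    intro k u; simp [Multiset.map_replicate, Multiset.sum_replicate, mul_comm]
  rcases le_total b a with hab | hab
  · have rt : Multiset.replicate a [true]
        = Multiset.replicate b [true] + Multiset.replicate (a - b) [true] := by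
      rw [← Multiset.replicate_add]; congr 1; omega
    refine ⟨p :: Rx, p :: Ry, Multiset.replicate (a - b) [true],
      Multiset.replicate (a - b) [false], hfx, hfy, hlen.1, hlen.2, ?_, ?_, ?_, ?_, ?_⟩
    · calc Multiset.replicate (a - b) [true] ≤ Multiset.replicate a [true] :=
            (Multiset.replicate_le_replicate _).2 (Nat.sub_le a b)
        _ ≤ (↑Rx : Multiset (List Bool)) := by
            rw [hmx]
            exact le_trans (self_le_add_left _ _) (self_le_add_right _ _)
        _ ≤ _ := by simp only [← Multiset.cons_coe]; exact Multiset.le_cons_self _ _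
    · calc Multiset.replicate (a - b) [false] ≤ Multiset.replicate a [false] :=
            (Multiset.replicate_le_replicate _).2 (Nat.sub_le a b)
        _ ≤ (↑Ry : Multiset (List Bool)) := by
            rw [hmy]; exact self_le_add_left _ _
        _ ≤ _ := by simp only [← Multiset.cons_coe]; exact Multiset.le_cons_self _ _
    · rw [hsum]; simp; omega
    · rw [hsum]; simp; omega
    · have hx2 : ((↑(p :: Rx) : Multiset (List Bool)))
          = ({p} + C + Multiset.replicate b [true] + Multiset.replicate b [false])
            + Multiset.replicate (a - b) [true] := by
        simp only [← Multiset.cons_coe, hmx, ← Multiset.singleton_add, rt]; abel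
      have hy2 : ((↑(p :: Ry) : Multiset (List Bool)))
          = ({p} + C + Multiset.replicate b [true] + Multiset.replicate b [false])
            + Multiset.replicate (a - b) [false] := by
        have rf : Multiset.replicate a [false]
            = Multiset.replicate b [false] + Multiset.replicate (a - b) [false] := by
          rw [← Multiset.replicate_add]; congr 1; omega
        simp only [← Multiset.cons_coe, hmy, ← Multiset.singleton_add, rf]; abel
      rw [hx2, hy2, add_tsub_cancel_right, add_tsub_cancel_right]
  · have rf : Multiset.replicate b [false]
        = Multiset.replicate a [false] + Multiset.replicate (b - a) [false] := by
      rw [← Multiset.replicate_add]; congr 1; omega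
    refine ⟨p :: Rx, p :: Ry, Multiset.replicate (b - a) [false],
      Multiset.replicate (b - a) [true], hfx, hfy, hlen.1, hlen.2, ?_, ?_, ?_, ?_, ?_⟩
    · calc Multiset.replicate (b - a) [false] ≤ Multiset.replicate b [false] :=
            (Multiset.replicate_le_replicate _).2 (Nat.sub_le b a)
        _ ≤ (↑Rx : Multiset (List Bool)) := by
            rw [hmx]; exact self_le_add_left _ _
        _ ≤ _ := by simp only [← Multiset.cons_coe]; exact Multiset.le_cons_self _ _
    · calc Multiset.replicate (b - a) [true] ≤ Multiset.replicate b [true] :=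
            (Multiset.replicate_le_replicate _).2 (Nat.sub_le b a)
        _ ≤ (↑Ry : Multiset (List Bool)) := by
            rw [hmy]
            exact le_trans (self_le_add_left _ _) (self_le_add_right _ _)
        _ ≤ _ := by simp only [← Multiset.cons_coe]; exact Multiset.le_cons_self _ _
    · rw [hsum]; simp; omega
    · rw [hsum]; simp; omega
    · have hx2 : ((↑(p :: Rx) : Multiset (List Bool)))
          = ({p} + C + Multiset.replicate a [true] + Multiset.replicate a [false])
            + Multiset.replicate (b - a) [false] := by
        simp only [← Multiset.cons_coe, hmx, ← Multiset.singleton_add, rf]; abel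
      have hy2 : ((↑(p :: Ry) : Multiset (List Bool)))
          = ({p} + C + Multiset.replicate a [true] + Multiset.replicate a [false])
            + Multiset.replicate (b - a) [true] := by
        have rt : Multiset.replicate b [true]
            = Multiset.replicate a [true] + Multiset.replicate (b - a) [true] := by
          rw [← Multiset.replicate_add]; congr 1; omega
        simp only [← Multiset.cons_coe, hmy, ← Multiset.singleton_add, rt]; abel
      rw [hx2, hy2, add_tsub_cancel_right, add_tsub_cancel_right]
end

section
/- Let C ⊆ {0,1}^n be a (t,s)-break-resilient code, and for each natural number i let D_i = {c ∈ C : (s+1)·i ≤ wt(c) < (s+1)·(i+1)}. Then for every i, any two distinct codewords x, y ∈ D_i satisfy d_H(x,y) ≥ ⌈t/2⌉; that is, the minimum Hamming distance of each subcode D_i is at least ⌈t/2⌉. -/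
/-- A `(t,s)`-break-resilient code of length `n`: a set of binary strings of length `n`
no two distinct elements of which are `(t,s)`-confusable. -/
def IsBRC (t s n : ℕ) (C : Set (List Bool)) : Prop :=
  (∀ c ∈ C, c.length = n) ∧
  ∀ x ∈ C, ∀ y ∈ C, x ≠ y → ¬ Confusable t s x y

/-- Number of positions where `x` has `1` and `y` has `0`. -/
def cntA (x y : List Bool) : ℕ := ((x.zip y).filter fun p => p.1 && !p.2).length

/-- Number of positions where `x` has `0` and `y` has `1`. -/
def cntB (x y : List Bool) : ℕ := ((x.zip y).filter fun p => !p.1 && p.2).length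

/-- Fragmentation of `x` and `y`: each differing position becomes a singleton fragment,
and maximal agreeing runs become shared fragments. Returns the leading agreeing run
and the remaining fragment lists for `x` and `y`. -/
def gfrag : List Bool → List Bool → List Bool × List (List Bool) × List (List Bool)
  | a :: x, b :: y =>
    let r := gfrag x y
    if a = b then (a :: r.1, r.2.1, r.2.2)
    else ([], [a] :: r.1 :: r.2.1, [b] :: r.1 :: r.2.2)
  | _, _ => ([], [], [])

lemma hd_eq : ∀ x y : List Bool, hammingD x y = cntA x y + cntB x y := by
  intro x
  induction x with
  | nil => intro y; cases y <;> simp [hammingD, cntA, cntB]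
  | cons a x ih =>
    intro y
    cases y with
    | nil => simp [hammingD, cntA, cntB]
    | cons b y =>
      have h := ih y
      cases a <;> cases b <;>
        simp [hammingD, cntA, cntB, List.zip_cons_cons, List.filter_cons,
          List.count_cons] at h ⊢ <;> omega

lemma wt_eq : ∀ x y : List Bool, x.length = y.length →
    hammingWt x + cntB x y = hammingWt y + cntA x y := by
  intro x
  induction x with
  | nil => intro y hy; cases y <;> simp_all [hammingWt, cntA, cntB]
  | cons a x ih =>
    intro y hy
    cases y with
    | nil => simp at hy
    | cons b y =>
      simp at hy
      have h := ih y hy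
      cases a <;> cases b <;>
        simp [hammingWt, cntA, cntB, List.zip_cons_cons, List.filter_cons,
          List.count_cons] at h ⊢ <;> omega

lemma gfrag_spec : ∀ x y : List Bool, x.length = y.length →
    ((gfrag x y).1 :: (gfrag x y).2.1).flatten = x ∧
    ((gfrag x y).1 :: (gfrag x y).2.2).flatten = y ∧
    (gfrag x y).2.1.length = 2 * (cntA x y + cntB x y) ∧
    (gfrag x y).2.2.length = 2 * (cntA x y + cntB x y) ∧
    ∃ S : Multiset (List Bool),
      ((gfrag x y).2.1 : Multiset (List Bool))
        = S + (Multiset.replicate (cntA x y) [true] + Multiset.replicate (cntB x y) [false]) ∧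
      ((gfrag x y).2.2 : Multiset (List Bool))
        = S + (Multiset.replicate (cntB x y) [true] + Multiset.replicate (cntA x y) [false]) := by
  intro x
  induction x with
  | nil =>
    intro y hy; cases y with
    | nil => exact ⟨by simp [gfrag], by simp [gfrag], by simp [gfrag, cntA, cntB],
        by simp [gfrag, cntA, cntB], 0, by simp [gfrag, cntA, cntB], by simp [gfrag, cntA, cntB]⟩
    | cons b y => simp at hy
  | cons a x ih =>
    intro y hy
    cases y with
    | nil => simp at hy
    | cons b y =>
      simp at hy
      obtain ⟨h1, h2, h3, h4, S, h5, h6⟩ := ih y hy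
      cases a <;> cases b
      case false.false | true.true =>
        simp only [gfrag, cntA, cntB, List.zip_cons_cons, List.filter_cons] at h1 h2 h3 h4 h5 h6 ⊢
        norm_num
        exact ⟨by simpa using h1, by simpa using h2, h3, h4, S, h5, h6⟩
      case false.true | true.false =>
        simp only [gfrag, cntA, cntB, List.zip_cons_cons, List.filter_cons] at h1 h2 h3 h4 h5 h6 ⊢
        norm_num
        refine ⟨by simpa using h1, by simpa using h2, by omega, by omega,
          (gfrag x y).1 ::ₘ S, ?_, ?_⟩ <;>
        · simp only [← Multiset.cons_coe, h5, h6, Multiset.replicate_succ,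
            ← Multiset.singleton_add]
          abel

/-- For a `(t,s)`-BRC `C`, each weight-band subcode
`D_i = {c ∈ C : (s+1)·i ≤ wt(c) < (s+1)·(i+1)}` has minimum Hamming
distance at least `⌈t/2⌉`. -/
theorem weight_band_min_dist (t s n : ℕ) (C : Set (List Bool))
    (hC : IsBRC t s n C) (i : ℕ) (x y : List Bool)
    (hxC : x ∈ C) (hyC : y ∈ C)
    (hxD : (s + 1) * i ≤ hammingWt x ∧ hammingWt x < (s + 1) * (i + 1))
    (hyD : (s + 1) * i ≤ hammingWt y ∧ hammingWt y < (s + 1) * (i + 1))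
    (hxy : x ≠ y) :
    (t + 1) / 2 ≤ hammingD x y := by
  by_contra hcon
  push_neg at hcon
  apply hC.2 x hxC y hyC hxy
  have hlen : x.length = y.length := by rw [hC.1 x hxC, hC.1 y hyC]
  obtain ⟨h1, h2, h3, h4, S, h5, h6⟩ := gfrag_spec x y hlen
  have hwt := wt_eq x y hlen
  have hdd := hd_eq x y
  set A := cntA x y with hA
  set B := cntB x y with hB
  have hring : (s + 1) * (i + 1) = (s + 1) * i + (s + 1) := by ring
  have hABs : (A - B) + (B - A) ≤ s := by omega
  refine ⟨(gfrag x y).1 :: (gfrag x y).2.1, (gfrag x y).1 :: (gfrag x y).2.2,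
    Multiset.replicate (A - B) [true] + Multiset.replicate (B - A) [false],
    Multiset.replicate (A - B) [false] + Multiset.replicate (B - A) [true],
    h1, h2, ?_, ?_, ?_, ?_, ?_, ?_, ?_⟩
  · simp only [List.length_cons, h3]; omega
  · simp only [List.length_cons, h4]; omega
  · rw [Multiset.le_iff_count]
    intro l
    simp only [← Multiset.cons_coe, h5, Multiset.count_cons, Multiset.count_add,
      Multiset.count_replicate]
    split_ifs <;> omega
  · rw [Multiset.le_iff_count]
    intro l
    simp only [← Multiset.cons_coe, h6, Multiset.count_cons, Multiset.count_add,
      Multiset.count_replicate]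
    split_ifs <;> omega
  · simp only [Multiset.map_add, Multiset.map_replicate, Multiset.sum_add,
      Multiset.sum_replicate, List.length_cons, List.length_nil, smul_eq_mul, mul_one]
    omega
  · simp only [Multiset.map_add, Multiset.map_replicate, Multiset.sum_add,
      Multiset.sum_replicate, List.length_cons, List.length_nil, smul_eq_mul, mul_one]
    omega
  · ext l
    simp only [← Multiset.cons_coe, h5, h6, Multiset.count_sub, Multiset.count_cons,
      Multiset.count_add, Multiset.count_replicate]
    split_ifs <;> omega
end

section
/- Fix natural numbers m ≥ M ≥ 2. Say that a string z ∈ {0,1}^m is window-distinct if for all indices i ≠ j with 0 ≤ i, j ≤ m − (M−1), the length-(M−1) substrings z[i : i+M−2] and z[j : j+M−2] are unequal. Then the map sending a window-distinct string z to the set of all its length-M contiguous substrings {z[i : i+M−1] : 0 ≤ i ≤ m−M} is injective on the set of window-distinct strings: if z and z' are both window-distinct strings of length m with the same set of length-M substrings, then z = z'. -/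
/-- A string `z` is window-distinct (for window length `M−1`) if all of its
contiguous substrings of length `M−1` at distinct valid positions are distinct. -/
def WindowDistinct (M : ℕ) (z : List Bool) : Prop :=
  ∀ i j : ℕ, i + (M - 1) ≤ z.length → j + (M - 1) ≤ z.length → i ≠ j →
    (z.drop i).take (M - 1) ≠ (z.drop j).take (M - 1)

/-- The set of all length-`M` contiguous substrings of `z` (as a set of strings). -/
def SubstrSet (M : ℕ) (z : List Bool) : Set (List Bool) :=
  {w | ∃ i : ℕ, i + M ≤ z.length ∧ w = (z.drop i).take M}

/-- The map sending a window-distinct string of length `m` to the set of its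
length-`M` contiguous substrings is injective on window-distinct strings. -/
theorem windowDistinct_substrSet_injective (m M : ℕ) (hM : 2 ≤ M) (hm : M ≤ m)
    (z z' : List Bool) (hz : z.length = m) (hz' : z'.length = m)
    (hw : WindowDistinct M z) (hw' : WindowDistinct M z')
    (hset : SubstrSet M z = SubstrSet M z') :
    z = z' := by
  -- prefix of the M-substring is the (M-1)-window
  have hWpref : ∀ (l : List Bool) (i : ℕ),
      (l.drop i).take (M-1) = ((l.drop i).take M).take (M-1) := by
    intro l i
    rw [List.take_take]
    congr 1
    omega
  -- suffix of the M-substring is the next (M-1)-window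
  have hWsuf : ∀ (l : List Bool) (i : ℕ),
      ((l.drop i).take M).drop 1 = (l.drop (i+1)).take (M-1) := by
    intro l i
    rw [List.drop_take, List.drop_drop]
  -- step: if window of z at i equals window of z' at j, and the M-substring
  -- at i exists, then windows at i+1 and j+1 also match.
  have step : ∀ i j : ℕ, i + M ≤ m → j + (M-1) ≤ m →
      (z.drop i).take (M-1) = (z'.drop j).take (M-1) →
      j + M ≤ m ∧ (z.drop (i+1)).take (M-1) = (z'.drop (j+1)).take (M-1) := by
    intro i j hiM hj heq
    have hmem : (z.drop i).take M ∈ SubstrSet M z := ⟨i, by omega, rfl⟩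
    rw [hset] at hmem
    obtain ⟨j₀, hj₀, he⟩ := hmem
    rw [hz'] at hj₀
    have hpre : (z.drop i).take (M-1) = (z'.drop j₀).take (M-1) := by
      rw [hWpref z i, hWpref z' j₀, he]
    have hjj : j = j₀ := by
      by_contra hne
      exact hw' j j₀ (by omega) (by omega) hne (heq.symm.trans hpre)
    subst hjj
    refine ⟨by omega, ?_⟩
    rw [← hWsuf z i, ← hWsuf z' j, he]
  -- base: the first window of z appears somewhere in z'
  have hbase : ∃ j₀, j₀ + (M-1) ≤ m ∧
      (z.drop 0).take (M-1) = (z'.drop j₀).take (M-1) := by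
    have hmem : (z.drop 0).take M ∈ SubstrSet M z := ⟨0, by omega, rfl⟩
    rw [hset] at hmem
    obtain ⟨j₀, hj₀, he⟩ := hmem
    rw [hz'] at hj₀
    exact ⟨j₀, by omega, by rw [hWpref z 0, hWpref z' j₀, he]⟩
  obtain ⟨j₀, hj₀, hbase⟩ := hbase
  -- induction: windows of z at i match windows of z' at j₀ + i
  have ind : ∀ i : ℕ, i + (M-1) ≤ m →
      j₀ + i + (M-1) ≤ m ∧ (z.drop i).take (M-1) = (z'.drop (j₀ + i)).take (M-1) := by
    intro i
    induction i with
    | zero => intro _; exact ⟨by omega, hbase⟩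
    | succ n ih =>
      intro hn
      obtain ⟨h1, h2⟩ := ih (by omega)
      obtain ⟨h3, h4⟩ := step n (j₀ + n) (by omega) h1 h2
      exact ⟨by omega, by rw [show j₀ + (n+1) = (j₀+n)+1 by omega]; exact h4⟩
  -- at the last window position, conclude j₀ = 0
  have hlast := ind (m - M + 1) (by omega)
  have hj0 : j₀ = 0 := by omega
  subst hj0
  -- so all windows agree at identical positions
  have hall : ∀ i : ℕ, i + (M-1) ≤ m →
      (z.drop i).take (M-1) = (z'.drop i).take (M-1) := by
    intro i hi
    simpa using (ind i hi).2
  -- conclude elementwise equality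
  apply List.ext_getElem (by omega)
  intro k h₁ h₂
  set i := min k (m - M + 1) with hi
  have hiv : i + (M-1) ≤ m := by omega
  have hki : k - i < M - 1 := by omega
  have hw := hall i hiv
  have hlen1 : k - i < ((z.drop i).take (M-1)).length := by
    simp [List.length_take, List.length_drop, hz]
    omega
  have hlen2 : k - i < ((z'.drop i).take (M-1)).length := by
    simp [List.length_take, List.length_drop, hz']
    omega
  have e1 : ((z.drop i).take (M-1))[k-i]'hlen1 = z[k]'h₁ := by
    rw [List.getElem_take, List.getElem_drop]
    congr 1
    omega
  have e2 : ((z'.drop i).take (M-1))[k-i]'hlen2 = z'[k]'h₂ := by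
    rw [List.getElem_take, List.getElem_drop]
    congr 1
    omega
  rw [← e1, ← e2]; simp only [hw]
end

section
/- Let M ≥ 1 and L ≥ 1 be natural numbers, and let r be the concatenation b_0 ∘ a_1 ∘ b_1 ∘ a_2 ∘ b_2 ∘ ⋯ ∘ a_L ∘ b_L, where each a_i is a binary string of length M and each b_i is a binary string of length M+1. Then every contiguous substring of r of length at least 3M+1 contains some b_i entirely as a contiguous substring (i.e., the occurrence of b_i at its designated position in r lies within the substring's range). -/
/-!
The markers start at the positions `i * (2M + 1)`, so a window starting at `p` contains the marker
beginning at the first multiple of `2M + 1` that is `≥ p`: it begins less than `2M + 1` after `p`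
and ends at most `3M + 1` after `p`.
-/

theorem List.drop_mul_flatten {α : Type*} {l : List (List α)} {c : ℕ}
    (h : ∀ x ∈ l, x.length = c) (k : ℕ) : l.flatten.drop (k * c) = (l.drop k).flatten := by
  induction l generalizing k with
  | nil => simp
  | cons x t ih =>
    obtain ⟨rfl, ht⟩ := List.forall_mem_cons.1 h
    cases k with
    | zero => simp
    | succ k =>
      rw [Nat.succ_mul, add_comm, List.flatten_cons, List.drop_length_add_append, ih ht,
        List.drop_succ_cons]

theorem Nat.exists_mul_mem_Ico (p : ℕ) {n : ℕ} (hn : 0 < n) :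
    ∃ i, p ≤ i * n ∧ i * n < p + n := by
  refine ⟨(p + n - 1) / n, ?_, ?_⟩ <;>
  · have := Nat.div_add_mod (p + n - 1) n
    have := Nat.mod_lt (p + n - 1) hn
    rw [mul_comm]
    omega

def interleaveMarkers {α : Type*} {L : ℕ} (a : Fin L → List α) (bs : Fin (L + 1) → List α) :
    List α :=
  bs 0 ++ ((List.finRange L).map fun i => a i ++ bs i.succ).flatten

section InterleaveMarkers

variable {α : Type*} {M L : ℕ} {a : Fin L → List α} {bs : Fin (L + 1) → List α}

theorem length_interleaveMarkers (ha : ∀ i, (a i).length = M)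
    (hbs : ∀ i, (bs i).length = M + 1) :
    (interleaveMarkers a bs).length = L * (2 * M + 1) + (M + 1) := by
  simp [interleaveMarkers, Function.comp_def, ha, hbs, List.map_const']
  ring

theorem take_drop_interleaveMarkers (ha : ∀ i, (a i).length = M)
    (hbs : ∀ i, (bs i).length = M + 1) (i : Fin (L + 1)) :
    ((interleaveMarkers a bs).drop (i * (2 * M + 1))).take (M + 1) = bs i := by
  induction i using Fin.cases with
  | zero => simp [interleaveMarkers, List.take_left' (hbs 0)]
  | succ k =>
    have hblock : ∀ x ∈ (List.finRange L).map (fun i => a i ++ bs i.succ),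
        x.length = 2 * M + 1 := by
      simp [ha, hbs]
      omega
    have hpos : (k.succ : ℕ) * (2 * M + 1) = (bs 0).length + (k * (2 * M + 1) + M) := by
      simp [hbs]
      ring
    rw [interleaveMarkers, hpos, List.drop_length_add_append, ← List.drop_drop,
      List.drop_mul_flatten hblock, List.drop_eq_getElem_cons (i := k) (by simp),
      List.flatten_cons]
    simp [List.drop_left' (ha k), List.take_left' (hbs k.succ)]

end InterleaveMarkers

theorem long_fragment_contains_marker_general (M L : ℕ)
    (a : Fin L → List Bool) (bs : Fin (L + 1) → List Bool)
    (ha : ∀ i, (a i).length = M) (hbs : ∀ i, (bs i).length = M + 1)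
    (r : List Bool)
    (hr : r = bs 0 ++ (List.flatten ((List.finRange L).map (fun i => a i ++ bs i.succ))))
    (p len : ℕ) (hlen : 3 * M + 1 ≤ len) (hbound : p + len ≤ r.length) :
    ∃ i : Fin (L + 1),
      p ≤ (i : ℕ) * (2 * M + 1) ∧
      (i : ℕ) * (2 * M + 1) + (M + 1) ≤ p + len ∧
      (r.drop ((i : ℕ) * (2 * M + 1))).take (M + 1) = bs i := by
  change r = interleaveMarkers a bs at hr
  subst hr
  have hn : 0 < 2 * M + 1 := by omega
  obtain ⟨i, hpi, hip⟩ := Nat.exists_mul_mem_Ico p hn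
  rw [length_interleaveMarkers ha hbs] at hbound
  have hiL : i ≤ L := Nat.le_of_mul_le_mul_right (by omega) hn
  exact ⟨⟨i, Nat.lt_succ_of_le hiL⟩, hpi, by simp only; omega,
    take_drop_interleaveMarkers ha hbs _⟩

/-- In the interleaved redundancy string
`r = b₀ ∘ a₁ ∘ b₁ ∘ a₂ ∘ b₂ ∘ ⋯ ∘ a_L ∘ b_L`, where each `aᵢ` has length `M` and
each `bᵢ` has length `M+1`, every contiguous substring of `r` of length at least
`3M+1` contains some marker `bᵢ` entirely (at its designated position
`i·(2M+1)` in `r`). -/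
theorem long_fragment_contains_marker (M L : ℕ) (hM : 1 ≤ M) (hL : 1 ≤ L)
    (a : Fin L → List Bool) (bs : Fin (L + 1) → List Bool)
    (ha : ∀ i, (a i).length = M) (hbs : ∀ i, (bs i).length = M + 1)
    (r : List Bool)
    (hr : r = bs 0 ++ (List.flatten ((List.finRange L).map (fun i => a i ++ bs i.succ))))
    (p len : ℕ) (hlen : 3 * M + 1 ≤ len) (hbound : p + len ≤ r.length) :
    ∃ i : Fin (L + 1),
      p ≤ (i : ℕ) * (2 * M + 1) ∧
      (i : ℕ) * (2 * M + 1) + (M + 1) ≤ p + len ∧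
      (r.drop ((i : ℕ) * (2 * M + 1))).take (M + 1) = bs i :=
  long_fragment_contains_marker_general M L a bs ha hbs r hr p len hlen hbound
end

section
/- Let m ≥ 1 and k ≥ 1 be natural numbers and let i, j be indices with 0 ≤ i < j ≤ m − k. Then the number of strings z ∈ {0,1}^m satisfying z[i : i+k−1] = z[j : j+k−1] is exactly 2^{m−k}. Equivalently, for a uniformly random z ∈ {0,1}^m, the probability that the two length-k windows starting at positions i and j coincide equals 2^{−k}, including the case of overlapping windows (j − i < k). -/
/-- Extension by periodicity: values inside the window `[j, j+k)` are copied
from `d` positions earlier. -/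
def extVal (d j k : ℕ) (hd : 0 < d) (hj : 0 < j) (w : ℕ → Bool) (a : ℕ) : Bool :=
  if j ≤ a ∧ a < j + k then extVal d j k hd hj w (a - d) else w a
termination_by a
decreasing_by omega

lemma extVal_eq (d j k : ℕ) (hd : 0 < d) (hj : 0 < j) (hdj : d ≤ j)
    (z w : ℕ → Bool) (hz : ∀ t, t < k → z (j - d + t) = z (j + t))
    (hw : ∀ n, ¬(j ≤ n ∧ n < j + k) → w n = z n) :
    ∀ a, extVal d j k hd hj w a = z a := by
  intro a
  induction a using Nat.strong_induction_on with
  | _ a ih =>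
    rw [extVal]
    split
    · next h =>
      rw [ih (a - d) (by omega)]
      have h1 := hz (a - j) (by omega)
      have e1 : j - d + (a - j) = a - d := by omega
      have e2 : j + (a - j) = a := by omega
      rw [e1, e2] at h1
      exact h1
    · next h => exact hw a h

/-- For fixed positions `0 ≤ i < j ≤ m − k`, the number of strings
`z ∈ {0,1}^m` whose length-`k` windows starting at `i` and `j` coincide is
exactly `2^(m−k)` (including the overlapping case `j − i < k`). -/
theorem count_equal_windows (m k : ℕ) (hm : 1 ≤ m) (hk : 1 ≤ k)
    (i j : ℕ) (hij : i < j) (hj : j ≤ m - k) :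
    {z : Fin m → Bool |
        ((List.ofFn z).drop i).take k = ((List.ofFn z).drop j).take k}.ncard =
      2 ^ (m - k) := by
  have hj1 : 0 < j := by omega
  have hjm : j + k ≤ m := by omega
  have him : i + k ≤ m := by omega
  have hd : 0 < j - i := by omega
  -- membership characterization
  have hmem : ∀ z : Fin m → Bool,
      (((List.ofFn z).drop i).take k = ((List.ofFn z).drop j).take k) ↔
        ∀ t, (ht : t < k) → z ⟨i + t, by omega⟩ = z ⟨j + t, by omega⟩ := by
    intro z
    constructor
    · intro h t ht
      have h1 : (((List.ofFn z).drop i).take k)[t]'(by simp; omega) =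
          (((List.ofFn z).drop j).take k)[t]'(by simp; omega) := by
        simp only [h]
      simpa [List.getElem_take, List.getElem_drop, List.getElem_ofFn] using h1
    · intro h
      apply List.ext_getElem (by simp; omega)
      intro n h1 h2
      have hn : n < k := by simp at h1; omega
      have := h n hn
      simpa [List.getElem_take, List.getElem_drop, List.getElem_ofFn] using this
  set S : Set (Fin m → Bool) :=
    {z : Fin m → Bool |
      ((List.ofFn z).drop i).take k = ((List.ofFn z).drop j).take k} with hS
  -- the set of "free" positions
  let F := {a : Fin m // a.val < j ∨ j + k ≤ a.val}
  -- lift a function on free positions to ℕ → Bool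
  let liftw : (F → Bool) → ℕ → Bool := fun w n =>
    if h : n < m ∧ (n < j ∨ j + k ≤ n) then w ⟨⟨n, h.1⟩, h.2⟩ else false
  have e1 : ↥S ≃ (F → Bool) := by
    refine ⟨fun z a => z.1 a.1,
      fun w => ⟨fun a => extVal (j - i) j k hd hj1 (liftw w) a.val, ?_⟩, ?_, ?_⟩
    · rw [hS, Set.mem_setOf_eq, hmem]
      intro t ht
      show extVal _ _ _ _ _ _ (i + t) = extVal _ _ _ _ _ _ (j + t)
      conv_rhs => rw [extVal]
      rw [if_pos (by omega)]
      congr 1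
      omega
    · rintro ⟨z, hz⟩
      apply Subtype.ext
      funext a
      show extVal (j - i) j k hd hj1 _ a.val = z a
      have hzc := (hmem z).1 hz
      have := extVal_eq (j - i) j k hd hj1 (by omega)
        (fun n => if h : n < m then z ⟨n, h⟩ else false)
        (liftw (fun a => z a.1)) ?_ ?_ a.val
      · rw [this, dif_pos a.isLt]
      · intro t ht
        have e1 : j - (j - i) + t = i + t := by omega
        rw [e1, dif_pos (show i + t < m by omega), dif_pos (show j + t < m by omega)]
        exact hzc t ht
      · intro n hn
        simp only [liftw]
        by_cases h : n < m
        · rw [dif_pos ⟨h, by omega⟩, dif_pos h]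
        · rw [dif_neg (by tauto), dif_neg h]
    · intro w
      funext a
      show extVal (j - i) j k hd hj1 (liftw w) a.1.val = w a
      rw [extVal, if_neg (by rcases a.2 with h | h <;> omega)]
      simp only [liftw]
      rw [dif_pos ⟨a.1.isLt, a.2⟩]
  have e2 : F ≃ Fin (m - k) := by
    refine ⟨fun a => ⟨if a.1.val < j then a.1.val else a.1.val - k, ?_⟩,
      fun t => ⟨⟨if t.val < j then t.val else t.val + k,
          by have := t.isLt; split_ifs <;> omega⟩,
        by have := t.isLt; dsimp only; split_ifs with h
           exacts [Or.inl h, Or.inr (by omega)]⟩, ?_, ?_⟩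
    · have := a.1.isLt
      rcases a.2 with h | h <;> split_ifs <;> omega
    · intro a
      have h1 := a.1.isLt
      have h2 := a.2
      apply Subtype.ext; apply Fin.ext
      dsimp only
      rcases h2 with h | h <;> split_ifs <;> omega
    · intro t
      have h1 := t.isLt
      apply Fin.ext
      dsimp only
      split_ifs <;> omega
  have : Nat.card ↥S = 2 ^ (m - k) := by
    rw [Nat.card_congr e1, Nat.card_congr (Equiv.arrowCongr e2 (Equiv.refl Bool))]
    simp [Nat.card_eq_fintype_card]
  rw [← Nat.card_coe_set_eq, this]
end
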